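/- The Stieltjes transform m of the semicircle law, m(z) = ∫_{-2}^2 ρ_sc(x)/(x - z) dx for Im z > 0, satisfies the self-consistent equation m(z)² + z m(z) + 1 = 0. -/

import Mathlib

/-!
Splitting `√(4-x²)/(x-z) = -(x+z)/√(4-x²) + (4-z²)/((x-z)√(4-x²))` gives the explicit primitive
`√(4-y²) - z arcsin(y/2) - t (log(4 - yz + t√(4-y²)) - log(y - z))`, where `t² = 4 - z²`.
For the square root `t` with `Re t ≥ 0` and `Im t · Re z ≤ 0`, both logarithms stay off the branch
cut for every real `y`, so the fundamental theorem of calculus on `[-2, 2]` gives the integral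
`π (i t - z)`. Hence `m(z) = (i t - z)/2`, a root of `m² + z m + 1` because `t² = 4 - z²`.
-/

open Matrix MeasureTheory Asymptotics
open scoped ComplexOrder BigOperators

/-- Normalized trace `⟨M⟩ = N⁻¹ Tr M`. -/
noncomputable def ntr {N : ℕ} (M : Matrix (Fin N) (Fin N) ℂ) : ℂ :=
  (N : ℂ)⁻¹ * M.trace

/-- The square root of a positive semidefinite matrix, as `Matrix.PosSemidef.sqrt` was defined in
Mathlib (December 2024), where it has since been removed. -/
noncomputable def Matrix.PosSemidef.sqrt {n : Type*} [Fintype n] [DecidableEq n]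
    {A : Matrix n n ℂ} (hA : A.PosSemidef) : Matrix n n ℂ :=
  hA.1.eigenvectorUnitary.1 * diagonal ((↑) ∘ (√·) ∘ hA.1.eigenvalues) *
    (star hA.1.eigenvectorUnitary : Matrix n n ℂ)

/-- `|A| = (A Aᴴ)^{1/2}`. -/
noncomputable def matAbs {N : ℕ} (A : Matrix (Fin N) (Fin N) ℂ) : Matrix (Fin N) (Fin N) ℂ :=
  (Matrix.posSemidef_self_mul_conjTranspose A).sqrt

/-- Euclidean operator norm of a matrix. -/
noncomputable def opNorm {N : ℕ} (A : Matrix (Fin N) (Fin N) ℂ) : ℝ :=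
  ‖Matrix.toEuclideanCLM (𝕜 := ℂ) A‖

/-- Normalized `p`-th Schatten norm `⟨|A|^p⟩^{1/p}`. -/
noncomputable def schatten {N : ℕ} (p : ℕ) (A : Matrix (Fin N) (Fin N) ℂ) : ℝ :=
  (ntr (matAbs A ^ p)).re ^ ((p : ℝ)⁻¹)

/-- The `ℓ`-weighted `(2,p)`-Schatten norm, `p ∈ [2,∞]` (`p = ⊤` uses the operator norm). -/
noncomputable def wnorm {N : ℕ} (p : ℕ∞) (ℓ : ℝ) (A : Matrix (Fin N) (Fin N) ℂ) : ℝ :=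
  p.recTopCoe (schatten 2 A / ℓ ^ ((2:ℝ)⁻¹) + opNorm A)
    (fun q => schatten 2 A / ℓ ^ ((2:ℝ)⁻¹) + schatten q A / ℓ ^ ((q : ℝ)⁻¹))

/-- Resolvent `G(ζ) = (W - ζ)⁻¹`. -/
noncomputable def resOf {N : ℕ} (W : Matrix (Fin N) (Fin N) ℂ) (ζ : ℂ) :
    Matrix (Fin N) (Fin N) ℂ :=
  (W - ζ • (1 : Matrix (Fin N) (Fin N) ℂ))⁻¹

/-- `Im G = (G - Gᴴ)/(2i)`. -/
noncomputable def imPart {N : ℕ} (G : Matrix (Fin N) (Fin N) ℂ) : Matrix (Fin N) (Fin N) ℂ :=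
  (2 * Complex.I)⁻¹ • (G - Gᴴ)

/-- Bessel function of the first kind of order one (integral representation). -/
noncomputable def besselJ1 (x : ℝ) : ℝ :=
  (1 / Real.pi) * ∫ θ in (0:ℝ)..Real.pi, Real.cos (θ - x * Real.sin θ)

/-- Semicircle density on `[-2,2]`. -/
noncomputable def rhoSC (x : ℝ) : ℝ := (1 / (2 * Real.pi)) * Real.sqrt (4 - x ^ 2)

/-- Stieltjes transform of the semicircle law. -/
noncomputable def mSC (z : ℂ) : ℂ := ∫ x in (-2:ℝ)..2, (rhoSC x : ℂ) / (x - z)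

/-- `φ(t) = J₁(2t)/t`, with `φ(0) = 1`. -/
noncomputable def phiSC (t : ℝ) : ℝ := if t = 0 then 1 else besselJ1 (2 * t) / t

open scoped Real

namespace Complex

lemma re_cpow_inv_two_nonneg (w : ℂ) : 0 ≤ (w ^ (2⁻¹ : ℂ)).re := by
  rw [cpow_inv_two_re]
  exact Real.sqrt_nonneg _

lemma im_cpow_inv_two_mul_im_nonneg (w : ℂ) : 0 ≤ (w ^ (2⁻¹ : ℂ)).im * w.im := by
  rcases le_or_gt 0 w.im with h | h
  · rw [cpow_inv_two_im_eq_sqrt h]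
    exact mul_nonneg (Real.sqrt_nonneg _) h
  · rw [cpow_inv_two_im_eq_neg_sqrt h]
    exact mul_nonneg_of_nonpos_of_nonpos (neg_nonpos.2 (Real.sqrt_nonneg _)) h.le

lemma log_neg_of_im_pos {w : ℂ} (hw : 0 < w.im) : log (-w) = log w - π * I := by
  rw [log, log, norm_neg, arg_neg_eq_arg_sub_pi_of_im_pos hw]
  push_cast
  ring

end Complex

section SemicircleStieltjes

open Complex

variable {z t : ℂ}

lemma exists_sq_eq_four_sub_sq (hz : 0 < z.im) :
    ∃ t : ℂ, t ^ 2 = 4 - z ^ 2 ∧ 0 ≤ t.re ∧ t.im * z.re ≤ 0 := by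
  refine ⟨(4 - z ^ 2) ^ (2⁻¹ : ℂ), cpow_ofNat_inv_pow _ 2, re_cpow_inv_two_nonneg _, ?_⟩
  have h := im_cpow_inv_two_mul_im_nonneg (4 - z ^ 2)
  have him : (4 - z ^ 2).im = -2 * z.re * z.im := by simp [sq]; ring
  rw [him] at h
  nlinarith

lemma ofReal_sub_mem_slitPlane (hz : 0 < z.im) (x : ℝ) : (x : ℂ) - z ∈ slitPlane :=
  mem_slitPlane_iff.2 (Or.inr (by simpa using hz.ne'))

lemma four_sub_mul_add_mul_sqrt_mem_slitPlane (hz : 0 < z.im) (ht_re : 0 ≤ t.re)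
    (ht_im : t.im * z.re ≤ 0) (x : ℝ) :
    4 - x * z + t * √(4 - x ^ 2) ∈ slitPlane := by
  set q := √(4 - x ^ 2)
  have hq : 0 ≤ q := Real.sqrt_nonneg _
  rw [mem_slitPlane_iff]
  by_contra! h
  obtain ⟨hre, him⟩ := h
  simp only [sub_re, add_re, mul_re, ofReal_re, ofReal_im, re_ofNat, im_ofNat, sub_im, add_im,
    mul_im, mul_zero, zero_mul, sub_zero, add_zero, zero_add, zero_sub] at hre him
  have hxz_re : 4 ≤ x * z.re := by nlinarith [mul_nonneg ht_re hq]
  have hxz_im : x * z.im = t.im * q := by linarith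
  have : x * z.re * z.im ≤ 0 := calc
    x * z.re * z.im = t.im * z.re * q := by linear_combination z.re * hxz_im
    _ ≤ 0 := mul_nonpos_of_nonpos_of_nonneg ht_im hq
  nlinarith

lemma hasDerivAt_sqrt_four_sub_sq {x : ℝ} (hx : x ^ 2 < 4) :
    HasDerivAt (fun y : ℝ => √(4 - y ^ 2)) (-x / √(4 - x ^ 2)) x := by
  have h := ((hasDerivAt_pow 2 x).const_sub 4).sqrt (by linarith)
  convert h using 1
  have : √(4 - x ^ 2) ≠ 0 := (Real.sqrt_pos.2 (by linarith)).ne'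
  field_simp
  ring

lemma hasDerivAt_arcsin_half {x : ℝ} (hx : x ^ 2 < 4) :
    HasDerivAt (fun y : ℝ => Real.arcsin (y / 2)) (1 / √(4 - x ^ 2)) x := by
  have h := (Real.hasDerivAt_arcsin (x := x / 2) (by nlinarith) (by nlinarith)).comp x
    ((hasDerivAt_id x).div_const 2)
  have hsqrt : √(1 - (x / 2) ^ 2) = √(4 - x ^ 2) / 2 := by
    rw [show 1 - (x / 2) ^ 2 = (4 - x ^ 2) / 2 ^ 2 by ring, Real.sqrt_div' _ (by norm_num),
      Real.sqrt_sq (by norm_num)]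
  rw [hsqrt, one_div_div, div_mul_eq_mul_div, mul_one_div_cancel two_ne_zero] at h
  exact h

noncomputable def semicircleStieltjesPrimitive (z t : ℂ) (y : ℝ) : ℂ :=
  (√(4 - y ^ 2) : ℂ) - z * Real.arcsin (y / 2)
    - t * (log (4 - y * z + t * √(4 - y ^ 2)) - log (y - z))

lemma hasDerivAt_semicircleStieltjesPrimitive (hz : 0 < z.im) (ht : t ^ 2 = 4 - z ^ 2)
    (ht_re : 0 ≤ t.re) (ht_im : t.im * z.re ≤ 0) {x : ℝ} (hx : x ^ 2 < 4) :
    HasDerivAt (semicircleStieltjesPrimitive z t) (√(4 - x ^ 2) / (x - z)) x := by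
  have hofReal : HasDerivAt (fun y : ℝ => (y : ℂ)) 1 x := (hasDerivAt_id x).ofReal_comp
  have hsqrt := (hasDerivAt_sqrt_four_sub_sq hx).ofReal_comp
  have hN := ((hofReal.mul_const z).const_sub 4).add (hsqrt.const_mul t)
  have hlogN := hN.clog_real (four_sub_mul_add_mul_sqrt_mem_slitPlane hz ht_re ht_im x)
  have hlog := (hofReal.sub_const z).clog_real (ofReal_sub_mem_slitPlane hz x)
  have h := (hsqrt.sub ((hasDerivAt_arcsin_half hx).ofReal_comp.const_mul z)).sub
    ((hlogN.sub hlog).const_mul t)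
  refine h.congr_deriv ?_
  have hN0 := slitPlane_ne_zero (four_sub_mul_add_mul_sqrt_mem_slitPlane hz ht_re ht_im x)
  have hxz := slitPlane_ne_zero (ofReal_sub_mem_slitPlane hz x)
  simp only [Pi.add_apply]
  push_cast
  set q := √(4 - x ^ 2)
  have hq : (q : ℂ) ≠ 0 := ofReal_ne_zero.2 (Real.sqrt_pos.2 (by linarith)).ne'
  have hq2 : (q : ℂ) ^ 2 = 4 - x ^ 2 := by exact_mod_cast Real.sq_sqrt (by linarith)
  generalize hN : 4 - x * z + t * q = N at hN0 ⊢
  field_simp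
  linear_combination (x * (x - z) + q ^ 2) * ht + (x * z - z ^ 2 - t * q) * hq2
    + (x ^ 2 - z ^ 2 - t * q + q ^ 2) * hN

lemma continuous_semicircleStieltjesPrimitive (hz : 0 < z.im) (ht_re : 0 ≤ t.re)
    (ht_im : t.im * z.re ≤ 0) : Continuous (semicircleStieltjesPrimitive z t) := by
  have hlogN : Continuous fun y : ℝ => log (4 - y * z + t * √(4 - y ^ 2)) :=
    Continuous.clog (by fun_prop) (four_sub_mul_add_mul_sqrt_mem_slitPlane hz ht_re ht_im)
  have hlog : Continuous fun y : ℝ => log (y - z) :=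
    Continuous.clog (by fun_prop) (ofReal_sub_mem_slitPlane hz)
  unfold semicircleStieltjesPrimitive
  fun_prop

lemma semicircleStieltjesPrimitive_two (hz : 0 < z.im) :
    semicircleStieltjesPrimitive z t 2 = -(π / 2 * z) - t * Real.log 2 := by
  have h2z : (2 : ℂ) - z ≠ 0 := slitPlane_ne_zero (by simpa using ofReal_sub_mem_slitPlane hz 2)
  have hN : 4 - (2 : ℝ) * z + t * √(4 - (2 : ℝ) ^ 2) = (2 : ℝ) * (2 - z) := by
    norm_num; ring
  rw [semicircleStieltjesPrimitive, hN, log_ofReal_mul two_pos h2z]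
  norm_num
  ring

lemma semicircleStieltjesPrimitive_neg_two (hz : 0 < z.im) :
    semicircleStieltjesPrimitive z t (-2) = π / 2 * z - t * (Real.log 2 + π * I) := by
  have h2z : 0 < (2 + z).im := by simpa using hz
  have h2z0 : (2 : ℂ) + z ≠ 0 := fun h => by simp [h] at h2z
  have hN : 4 - (-2 : ℝ) * z + t * √(4 - (-2 : ℝ) ^ 2) = (2 : ℝ) * (2 + z) := by
    norm_num; ring
  have hxz : ((-2 : ℝ) : ℂ) - z = -(2 + z) := by push_cast; ring
  rw [semicircleStieltjesPrimitive, hN, hxz, log_ofReal_mul two_pos h2z0, log_neg_of_im_pos h2z]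
  norm_num
  ring

lemma integral_sqrt_four_sub_sq_div_sub (hz : 0 < z.im) (ht : t ^ 2 = 4 - z ^ 2)
    (ht_re : 0 ≤ t.re) (ht_im : t.im * z.re ≤ 0) :
    ∫ x in (-2 : ℝ)..2, (√(4 - x ^ 2) : ℂ) / (x - z) = π * (I * t - z) := by
  have hint : IntervalIntegrable (fun x : ℝ => (√(4 - x ^ 2) : ℂ) / (x - z)) volume (-2) 2 :=
    (Continuous.div (by fun_prop) (by fun_prop)
      fun x => slitPlane_ne_zero (ofReal_sub_mem_slitPlane hz x)).intervalIntegrable _ _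
  rw [intervalIntegral.integral_eq_sub_of_hasDerivAt_of_le (by norm_num)
    (continuous_semicircleStieltjesPrimitive hz ht_re ht_im).continuousOn
    (fun x hx => hasDerivAt_semicircleStieltjesPrimitive hz ht ht_re ht_im
      (by nlinarith [hx.1, hx.2])) hint,
    semicircleStieltjesPrimitive_two hz, semicircleStieltjesPrimitive_neg_two hz]
  ring

lemma mSC_eq_I_mul_sub_div_two (hz : 0 < z.im) (ht : t ^ 2 = 4 - z ^ 2)
    (ht_re : 0 ≤ t.re) (ht_im : t.im * z.re ≤ 0) : mSC z = (I * t - z) / 2 := by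
  have hρ (x : ℝ) :
      (rhoSC x : ℂ) / (x - z) = (2 * π : ℂ)⁻¹ * ((√(4 - x ^ 2) : ℂ) / (x - z)) := by
    simp only [rhoSC]
    push_cast
    ring
  have hπ : (π : ℂ) ≠ 0 := ofReal_ne_zero.2 Real.pi_ne_zero
  simp_rw [mSC, hρ, intervalIntegral.integral_const_mul,
    integral_sqrt_four_sub_sq_div_sub hz ht ht_re ht_im]
  field_simp

end SemicircleStieltjes

/-- the semicircle Stieltjes transform satisfies `m² + zm + 1 = 0`. -/
theorem mSC_selfconsistent (z : ℂ) (hz : 0 < z.im) :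
    mSC z ^ 2 + z * mSC z + 1 = 0 := by
  obtain ⟨t, ht, ht_re, ht_im⟩ := exists_sq_eq_four_sub_sq hz
  rw [mSC_eq_I_mul_sub_div_two hz ht ht_re ht_im]
  linear_combination (-1 / 4 : ℂ) * ht + t ^ 2 / 4 * Complex.I_sq
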